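/- For ε ∈ (0,1/4], with f^{−ε}(p) := E[min{(p−S^{−ε})₊,(1−p)₊}] where S^{−ε} is 0 with probability (1−ε)/2 and 1/4 with probability (1+ε)/2: the unique maximizer of f^{−ε} on [0,1] is p = 5/8 with maximum value 3/8, and for every p ∈ [1/4, 9/16], f^{−ε}(5/8) − f^{−ε}(p) ≥ ε/16. -/
import Mathlib
open MeasureTheory

noncomputable def fgft (p s b : ℝ) : ℝ := min (max (p - s) 0) (max (b - p) 0)

/-- seller distribution: 0 w.p. (1+ε)/2, 1/4 w.p. (1-ε)/2 -/
noncomputable def sellerEps (ε : ℝ) : Measure ℝ :=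
  ENNReal.ofReal ((1 + ε)/2) • Measure.dirac 0
    + ENNReal.ofReal ((1 - ε)/2) • Measure.dirac (1/4)

noncomputable def fEps (ε p : ℝ) : ℝ := ∫ s, fgft p s 1 ∂(sellerEps ε)

lemma fgft_meas (p b : ℝ) : Measurable (fun s => fgft p s b) := by
  unfold fgft
  exact ((measurable_const.sub measurable_id).max measurable_const).min measurable_const

lemma fEps_eq (ε p : ℝ) (h1 : -1 ≤ ε) (h2 : ε ≤ 1) :
    fEps ε p = (1+ε)/2 * fgft p 0 1 + (1-ε)/2 * fgft p (1/4) 1 := by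
  have hm := fgft_meas p 1
  have hsm := hm.stronglyMeasurable
  unfold fEps sellerEps
  rw [integral_add_measure, integral_smul_measure, integral_smul_measure,
    integral_dirac' _ _ hsm, integral_dirac' _ _ hsm]
  · rw [ENNReal.toReal_ofReal (by linarith), ENNReal.toReal_ofReal (by linarith)]
    simp only [smul_eq_mul]
  · refine ((integrable_const (fgft p 0 1)).congr ?_).smul_measure (by simp)
    rw [MeasureTheory.ae_dirac_eq]
    exact Filter.eventually_pure.2 rfl
  · refine ((integrable_const (fgft p (1/4) 1)).congr ?_).smul_measure (by simp)
    rw [MeasureTheory.ae_dirac_eq]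
    exact Filter.eventually_pure.2 rfl

theorem fEps_neg_max (ε : ℝ) (hε : ε ∈ Set.Ioc (0:ℝ) (1/4)) :
    fEps (-ε) (5/8) = 3/8 ∧
      (∀ p ∈ Set.Icc (0:ℝ) 1,
        fEps (-ε) p ≤ fEps (-ε) (5/8) ∧ (fEps (-ε) p = fEps (-ε) (5/8) → p = 5/8)) ∧
      ∀ p ∈ Set.Icc (1/4 : ℝ) (9/16), fEps (-ε) (5/8) - fEps (-ε) p ≥ ε/16 := by
  obtain ⟨hε0, hε1⟩ := hε
  have key : ∀ p : ℝ, fEps (-ε) p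
      = (1-ε)/2 * min (max p 0) (max (1-p) 0)
        + (1+ε)/2 * min (max (p-1/4) 0) (max (1-p) 0) := by
    intro p
    rw [fEps_eq (-ε) p (by linarith) (by linarith)]
    unfold fgft
    rw [sub_zero]
    ring
  have h58 : fEps (-ε) (5/8) = 3/8 := by
    rw [key]; norm_num; ring
  refine ⟨h58, ?_, ?_⟩
  · rintro p ⟨hp0, hp1⟩
    rw [key, h58]
    have hmax1 : max (1-p) 0 = 1-p := max_eq_left (by linarith)
    have hmaxp : max p 0 = p := max_eq_left hp0
    rw [hmax1, hmaxp]
    rcases le_total p (1/4) with h14 | h14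
    · rw [max_eq_right (by linarith : p - 1/4 ≤ 0),
        min_eq_left (by linarith : (0:ℝ) ≤ 1-p),
        min_eq_left (by linarith : p ≤ 1-p)]
      constructor
      · nlinarith
      · intro h; nlinarith
    · have hmax2 : max (p-1/4) 0 = p-1/4 := max_eq_left (by linarith)
      rw [hmax2]
      rcases le_total p (5/8) with h58' | h58'
      · rw [min_eq_left (by linarith : p - 1/4 ≤ 1-p)]
        rcases le_total p (1/2) with h12 | h12
        · rw [min_eq_left (by linarith : p ≤ 1-p)]
          constructor
          · nlinarith
          · intro h; nlinarith
        · rw [min_eq_right (by linarith : 1-p ≤ p)]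
          constructor
          · nlinarith
          · intro h; nlinarith
      · rw [min_eq_right (by linarith : 1-p ≤ p - 1/4),
          min_eq_right (by linarith : 1-p ≤ p)]
        constructor
        · nlinarith
        · intro h; nlinarith
  · rintro p ⟨hp14, hp916⟩
    rw [h58, key]
    have hmax1 : max (1-p) 0 = 1-p := max_eq_left (by linarith)
    have hmaxp : max p 0 = p := max_eq_left (by linarith)
    have hmax2 : max (p-1/4) 0 = p-1/4 := max_eq_left (by linarith)
    rw [hmax1, hmaxp, hmax2, min_eq_left (by linarith : p - 1/4 ≤ 1-p)]
    rcases le_total p (1/2) with h12 | h12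
    · rw [min_eq_left (by linarith : p ≤ 1-p)]
      nlinarith
    · rw [min_eq_right (by linarith : 1-p ≤ p)]
      nlinarith
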